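/- The polar transform L ↦ L° is continuous as a map from the family of closed convex subsets of ℝ^d containing the origin in their interior, equipped with the Fell topology, to the family of nonempty compact convex subsets of ℝ^d containing the origin, equipped with the Hausdorff metric: if closed convex sets L_n, each containing 0 in its interior, converge in the Painlevé–Kuratowski sense to a closed convex set L containing 0 in its interior, then L_n° converges to L° in the Hausdorff metric. -/

import Mathlib

open Set Filter Topology Pointwise

noncomputable section

abbrev Euc (d : ℕ) := EuclideanSpace ℝ (Fin d)

/-- The polar set `L° = { x : ⟨x,y⟩ ≤ 1 ∀ y ∈ L }`. -/
def polarSet {d : ℕ} (L : Set (Euc d)) : Set (Euc d) :=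
  {x | ∀ y ∈ L, (inner ℝ x y : ℝ) ≤ 1}

/-- The lower limit of a sequence of sets. -/
def setLimInf {d : ℕ} (F : ℕ → Set (Euc d)) : Set (Euc d) :=
  {x | ∃ f : ℕ → Euc d, (∀ n, f n ∈ F n) ∧ Tendsto f atTop (nhds x)}

/-- The upper limit of a sequence of sets. -/
def setLimSup {d : ℕ} (F : ℕ → Set (Euc d)) : Set (Euc d) :=
  {x | ∃ φ : ℕ → ℕ, StrictMono φ ∧
    ∃ f : ℕ → Euc d, (∀ k, f k ∈ F (φ k)) ∧ Tendsto f atTop (nhds x)}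

/-- Painlevé–Kuratowski convergence of a sequence of sets. -/
def PKConv {d : ℕ} (F : ℕ → Set (Euc d)) (F₀ : Set (Euc d)) : Prop :=
  setLimSup F = F₀ ∧ setLimInf F = F₀

open Metric RealInnerProductSpace

variable {d : ℕ}

lemma polarSet_closed (L : Set (Euc d)) : IsClosed (polarSet L) := by
  have : polarSet L = ⋂ y ∈ L, {x : Euc d | (inner ℝ x y : ℝ) ≤ 1} := by
    ext x; simp [polarSet]
  rw [this]
  exact isClosed_biInter fun y _ =>
    isClosed_le (Continuous.inner continuous_id continuous_const) continuous_const

lemma polarSet_convex (L : Set (Euc d)) : Convex ℝ (polarSet L) := by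
  intro x hx z hz a b ha hb hab y hy
  have hx' := hx y hy
  have hz' := hz y hy
  have : (inner ℝ (a • x + b • z) y : ℝ) = a * inner ℝ x y + b * inner ℝ z y := by
    rw [inner_add_left, real_inner_smul_left, real_inner_smul_left]
  rw [this]
  calc a * inner ℝ x y + b * inner ℝ z y ≤ a * 1 + b * 1 := by
        gcongr <;> assumption
    _ = 1 := by linarith

lemma zero_mem_polarSet (L : Set (Euc d)) : (0 : Euc d) ∈ polarSet L := by
  intro y hy; simp

lemma polarSet_antitone {L M : Set (Euc d)} (h : L ⊆ M) : polarSet M ⊆ polarSet L :=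
  fun x hx y hy => hx y (h hy)

lemma polarSet_subset_closedBall {L : Set (Euc d)} {r : ℝ} (hr : 0 < r)
    (h : closedBall (0 : Euc d) r ⊆ L) : polarSet L ⊆ closedBall 0 r⁻¹ := by
  intro x hx
  rcases eq_or_ne x 0 with rfl | hx0
  · simp [le_of_lt hr, inv_nonneg]
  · have hxn : (0:ℝ) < ‖x‖ := norm_pos_iff.2 hx0
    have hy : (r / ‖x‖) • x ∈ L := by
      apply h
      simp only [mem_closedBall, dist_zero_right, norm_smul]
      rw [Real.norm_eq_abs, abs_of_nonneg (by positivity)]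
      rw [div_mul_cancel₀ _ (ne_of_gt hxn)]
    have := hx _ hy
    rw [real_inner_smul_right, real_inner_self_eq_norm_sq] at this
    have h2 : r * ‖x‖ ≤ 1 := by
      have : r / ‖x‖ * ‖x‖ ^ 2 = r * ‖x‖ := by field_simp
      linarith [this ▸ ‹r / ‖x‖ * ‖x‖^2 ≤ 1›]
    rw [mem_closedBall, dist_zero_right]
    rw [show r⁻¹ = 1 / r by ring, le_div_iff₀ hr]
    linarith

lemma exists_closedBall_subset {L : Set (Euc d)} (h : (0 : Euc d) ∈ interior L) :
    ∃ r > (0:ℝ), closedBall (0 : Euc d) r ⊆ L := by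
  rcases Metric.isOpen_iff.1 isOpen_interior 0 h with ⟨ε, hε, hball⟩
  exact ⟨ε/2, by positivity, fun y hy => interior_subset (hball
    (lt_of_le_of_lt (mem_closedBall.1 hy) (by linarith)))⟩

lemma polarSet_compact {L : Set (Euc d)} (h : (0 : Euc d) ∈ interior L) :
    IsCompact (polarSet L) := by
  obtain ⟨r, hr, hball⟩ := exists_closedBall_subset h
  exact (isCompact_closedBall (0:Euc d) r⁻¹).of_isClosed_subset (polarSet_closed L)
    (polarSet_subset_closedBall hr hball)

lemma bip {L : Set (Euc d)} (hcl : IsClosed L) (hconv : Convex ℝ L)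
    (h0 : (0 : Euc d) ∈ L) {R : ℝ} (hR : 0 < R) {x : Euc d}
    (hx : x ∈ polarSet (L ∩ closedBall 0 R)) :
    infDist x (polarSet L) ≤ 1 / R := by
  by_contra hcon
  push_neg at hcon
  set K := polarSet L with hK
  have hKne : K.Nonempty := ⟨0, zero_mem_polarSet L⟩
  obtain ⟨p, hpK, hpd⟩ := (polarSet_closed L).exists_infDist_eq_dist hKne x
  set t := dist x p with ht
  have htpos : 1 / R < t := by rw [← hpd]; exact hcon
  have ht0 : 0 < t := lt_trans (by positivity) htpos
  have hproj : ∀ z ∈ K, ⟪x - p, z - p⟫ ≤ 0 := by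
    have heq : ‖x - p‖ = ⨅ w : K, ‖x - w‖ := by
      rw [← dist_eq_norm, ← ht, ← hpd, infDist_eq_iInf]
      exact iInf_congr fun w => dist_eq_norm x w
    exact (norm_eq_iInf_iff_real_inner_le_zero (polarSet_convex L) hpK).1 heq
  set u := x - p with hu
  have hunorm : ‖u‖ = t := by rw [hu, ← dist_eq_norm]
  have hpu : 0 ≤ ⟪u, p⟫ := by
    have := hproj 0 (zero_mem_polarSet L)
    rw [zero_sub, inner_neg_right] at this; linarith
  have hxu : ∀ μ : ℝ, (inner ℝ x (μ • u) : ℝ) = μ * ⟪u, p⟫ + μ * t^2 := by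
    intro μ
    rw [real_inner_smul_right, real_inner_comm]
    have hx' : x = u + p := by rw [hu]; abel
    rw [show ⟪u, x⟫ = ⟪u, u⟫ + ⟪u, p⟫ by rw [← inner_add_right, ← hx'],
      real_inner_self_eq_norm_sq, hunorm]
    ring
  -- separation-derived bound
  have hsep : ∀ l : ℝ, 0 < l → l • u ∉ L → 1 < l * ⟪u, p⟫ := by
    intro l hl hnl
    obtain ⟨f, c, hfc, hcf⟩ := geometric_hahn_banach_closed_point hconv hcl hnl
    have hc0 : 0 < c := by have := hfc 0 h0; simpa using this
    set w := (InnerProductSpace.toDual ℝ (Euc d)).symm f with hw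
    have hwf : ∀ v : Euc d, ⟪w, v⟫ = f v := fun v => InnerProductSpace.toDual_symm_apply
    have hzK : c⁻¹ • w ∈ K := by
      intro y hy
      have : (inner ℝ (c⁻¹ • w) y : ℝ) = c⁻¹ * f y := by rw [real_inner_smul_left, hwf]
      rw [this]
      calc c⁻¹ * f y ≤ c⁻¹ * c := by
            have h := le_of_lt (hfc y hy); gcongr
        _ = 1 := by field_simp
    have h2 : ⟪u, c⁻¹ • w⟫ ≤ ⟪u, p⟫ := by
      have := hproj _ hzK; rw [inner_sub_right] at this; linarith
    have h1 : 1 < l * ⟪u, c⁻¹ • w⟫ := by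
      have hfl : c < f (l • u) := hcf
      have : ⟪u, c⁻¹ • w⟫ = c⁻¹ * f u := by
        rw [real_inner_comm, real_inner_smul_left, hwf]
      rw [this]
      have hfu : f (l • u) = l * f u := by rw [map_smul]; rfl
      rw [hfu] at hfl
      rw [show l * (c⁻¹ * f u) = c⁻¹ * (l * f u) by ring]
      have := (mul_lt_mul_iff_right₀ (inv_pos.2 hc0)).2 hfl
      calc (1:ℝ) = c⁻¹ * c := by field_simp
        _ < c⁻¹ * (l * f u) := this
    calc (1:ℝ) < l * ⟪u, c⁻¹ • w⟫ := h1
      _ ≤ l * ⟪u, p⟫ := by gcongr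
  -- sup analysis
  set S := Icc (0:ℝ) (R / t) ∩ ((fun l : ℝ => l • u) ⁻¹' L) with hS
  have hScl : IsClosed S := (isClosed_Icc).inter (hcl.preimage (by continuity))
  have hScpt : IsCompact S := (isCompact_Icc).of_isClosed_subset hScl inter_subset_left
  have hSne : S.Nonempty := ⟨0, ⟨le_refl 0, by positivity⟩, by simpa using h0⟩
  set μ := sSup S with hμ
  have hμS : μ ∈ S := hScpt.sSup_mem hSne
  obtain ⟨⟨hμ0, hμle⟩, hμL⟩ := hμS
  have hmax : ∀ l : ℝ, μ < l → l ≤ R / t → l • u ∉ L := by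
    intro l hl1 hl2 hlL
    exact absurd (le_csSup hScpt.bddAbove ⟨⟨le_trans hμ0 (le_of_lt hl1), hl2⟩, hlL⟩)
      (not_le.2 hl1)
  have hxμ : (inner ℝ x (μ • u) : ℝ) ≤ 1 := by
    apply hx
    refine ⟨hμL, ?_⟩
    rw [mem_closedBall, dist_zero_right, norm_smul, Real.norm_eq_abs, abs_of_nonneg hμ0,
      hunorm]
    calc μ * t ≤ (R / t) * t := by gcongr
      _ = R := by field_simp
  rw [hxu] at hxμ
  rcases eq_or_lt_of_le hμle with heq | hlt
  · -- μ = R/t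
    have hle1 : R * t ≤ 1 := by
      have h1 : μ * t^2 = R * t := by rw [heq]; field_simp
      nlinarith
    have : 1 < R * t := by
      rw [div_lt_iff₀ hR] at htpos; linarith [htpos]
    linarith
  · have hRt0 : 0 < R / t := by positivity
    have hRtsep := hsep (R / t) hRt0 (hmax _ hlt le_rfl)
    have hpupos : 0 < ⟪u, p⟫ := by nlinarith
    have hlstar : (⟪u, p⟫)⁻¹ < R / t := by
      rw [inv_lt_iff_one_lt_mul₀ hpupos]
      linarith [hRtsep]
    have hμge : (⟪u, p⟫)⁻¹ ≤ μ := by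
      by_contra hcc
      push_neg at hcc
      have h3 := hsep _ (inv_pos.2 hpupos) (hmax _ hcc (le_of_lt hlstar))
      rw [inv_mul_cancel₀ (ne_of_gt hpupos)] at h3
      exact lt_irrefl 1 h3
    have hμpos : 0 < μ := lt_of_lt_of_le (inv_pos.2 hpupos) hμge
    have : 1 ≤ μ * ⟪u, p⟫ := by
      rw [← inv_mul_cancel₀ (ne_of_gt hpupos)]
      gcongr
    nlinarith

lemma eventually_locapprox_limsup {L : ℕ → Set (Euc d)} {L₀ : Set (Euc d)}
    (hsup : setLimSup L = L₀) (R : ℝ) {η : ℝ} (hη : 0 < η) :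
    ∀ᶠ n in atTop, ∀ y ∈ L n ∩ closedBall (0:Euc d) R, infDist y L₀ ≤ η := by
  by_contra hcon
  rw [Filter.not_eventually] at hcon
  have hfreq : ∀ _ : ℕ, ∃ᶠ n in atTop,
      ∃ y, (y ∈ L n ∩ closedBall (0:Euc d) R) ∧ η < infDist y L₀ := by
    intro _
    apply hcon.mono
    intro n hn
    push_neg at hn
    obtain ⟨y, hy1, hy2⟩ := hn
    exact ⟨y, hy1, hy2⟩
  obtain ⟨φ, hφ, hP⟩ := extraction_forall_of_frequently hfreq
  choose y hy1 hy2 using hP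
  obtain ⟨a, _, ψ, hψ, hwt⟩ :=
    (isCompact_closedBall (0:Euc d) R).tendsto_subseq (fun n => (hy1 n).2)
  have haL : a ∈ L₀ := by
    rw [← hsup]
    exact ⟨φ ∘ ψ, hφ.comp hψ, y ∘ ψ, fun k => (hy1 (ψ k)).1, hwt⟩
  have : ∀ᶠ k in atTop, dist (y (ψ k)) a < η := hwt (Metric.ball_mem_nhds a hη)
  obtain ⟨k, hk⟩ := this.exists
  have hlt : infDist (y (ψ k)) L₀ < η :=
    lt_of_le_of_lt (infDist_le_dist_of_mem haL) hk
  exact absurd (hy2 (ψ k)) (not_lt.2 hlt.le)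

lemma eventually_locapprox_liminf {L : ℕ → Set (Euc d)} {L₀ : Set (Euc d)}
    (hinf : setLimInf L = L₀) (hL₀cl : IsClosed L₀) (R : ℝ) {η : ℝ} (hη : 0 < η) :
    ∀ᶠ n in atTop, ∀ y ∈ L₀ ∩ closedBall (0:Euc d) R, infDist y (L n) ≤ η := by
  by_contra hcon
  rw [Filter.not_eventually] at hcon
  have hfreq : ∀ _ : ℕ, ∃ᶠ n in atTop,
      ∃ y, (y ∈ L₀ ∩ closedBall (0:Euc d) R) ∧ η < infDist y (L n) := by
    intro _
    apply hcon.mono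
    intro n hn
    push_neg at hn
    obtain ⟨y, hy1, hy2⟩ := hn
    exact ⟨y, hy1, hy2⟩
  obtain ⟨φ, hφ, hP⟩ := extraction_forall_of_frequently hfreq
  choose y hy1 hy2 using hP
  have hcpt : IsCompact (L₀ ∩ closedBall (0:Euc d) R) :=
    (isCompact_closedBall (0:Euc d) R).inter_left hL₀cl
  obtain ⟨a, hamem, ψ, hψ, hwt⟩ := hcpt.tendsto_subseq hy1
  have haL : a ∈ setLimInf L := by rw [hinf]; exact hamem.1
  obtain ⟨f, hf, hft⟩ := haL
  have h1 : ∀ᶠ k in atTop, dist (y (ψ k)) a < η / 2 :=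
    hwt (Metric.ball_mem_nhds a (by positivity))
  have h2 : ∀ᶠ k in atTop, dist (f (φ (ψ k))) a < η / 2 := by
    have : Tendsto (fun k => f (φ (ψ k))) atTop (𝓝 a) :=
      hft.comp ((hφ.comp hψ).tendsto_atTop)
    exact this (Metric.ball_mem_nhds a (by positivity))
  obtain ⟨k, hk1, hk2⟩ := (h1.and h2).exists
  have : infDist (y (ψ k)) (L (φ (ψ k))) ≤ η := by
    calc infDist (y (ψ k)) (L (φ (ψ k))) ≤ dist (y (ψ k)) (f (φ (ψ k))) :=
          infDist_le_dist_of_mem (hf _)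
      _ ≤ dist (y (ψ k)) a + dist (f (φ (ψ k))) a := dist_triangle_right _ _ _
      _ ≤ η := by linarith
  exact absurd this (not_le.2 (hy2 (ψ k)))

lemma eventually_polar_bounded {L : ℕ → Set (Euc d)} {L₀ : Set (Euc d)}
    (hinf : setLimInf L = L₀) (h0 : (0:Euc d) ∈ interior L₀) :
    ∃ M : ℝ, 0 < M ∧ ∀ᶠ n in atTop, ∀ x ∈ polarSet (L n), ‖x‖ ≤ M := by
  by_contra hcon
  push_neg at hcon
  have hfreq : ∀ m : ℕ, ∃ᶠ n in atTop, ∃ x, x ∈ polarSet (L n) ∧ (m + 1 : ℝ) < ‖x‖ := by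
    intro m
    have h := hcon (m+1) (by positivity)
    apply h.mono
    intro n hn
    obtain ⟨x, hx1, hx2⟩ := hn
    exact ⟨x, hx1, hx2⟩
  obtain ⟨φ, hφ, hP⟩ := extraction_forall_of_frequently hfreq
  choose x hx1 hx2 using hP
  have hxpos : ∀ m, (0:ℝ) < ‖x m‖ := fun m => lt_trans (by positivity) (hx2 m)
  set w : ℕ → Euc d := fun m => ‖x m‖⁻¹ • x m with hwdef
  have hwnorm : ∀ m, ‖w m‖ = 1 := by
    intro m
    rw [hwdef]
    simp only [norm_smul, Real.norm_eq_abs, abs_of_pos (inv_pos.2 (hxpos m))]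
    exact inv_mul_cancel₀ (ne_of_gt (hxpos m))
  have hwball : ∀ m, w m ∈ closedBall (0:Euc d) 1 := by
    intro m; rw [mem_closedBall, dist_zero_right, hwnorm m]
  obtain ⟨a, _, ψ, hψ, hwt⟩ := (isCompact_closedBall (0:Euc d) 1).tendsto_subseq hwball
  have hanorm : ‖a‖ = 1 := by
    have h1 : Tendsto (fun k => ‖(w ∘ ψ) k‖) atTop (𝓝 ‖a‖) := hwt.norm
    have h2 : (fun k => ‖(w ∘ ψ) k‖) = fun _ => (1:ℝ) := funext fun k => hwnorm (ψ k)
    rw [h2] at h1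
    exact (tendsto_nhds_unique tendsto_const_nhds h1).symm
  obtain ⟨r, hr, hball⟩ := exists_closedBall_subset h0
  have haL : r • a ∈ L₀ := by
    apply hball
    rw [mem_closedBall, dist_zero_right, norm_smul, Real.norm_eq_abs, abs_of_pos hr, hanorm,
      mul_one]
  rw [← hinf] at haL
  obtain ⟨f, hf, hft⟩ := haL
  have hkey : ∀ k : ℕ, (inner ℝ ((w ∘ ψ) k) (f (φ (ψ k))) : ℝ) ≤ ((k:ℝ) + 1)⁻¹ := by
    intro k
    have h1 : (inner ℝ (x (ψ k)) (f (φ (ψ k))) : ℝ) ≤ 1 := hx1 (ψ k) _ (hf (φ (ψ k)))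
    have h2 : (inner ℝ ((w ∘ ψ) k) (f (φ (ψ k))) : ℝ) = ‖x (ψ k)‖⁻¹ * inner ℝ (x (ψ k)) (f (φ (ψ k))) := by
      simp only [Function.comp_apply, hwdef, real_inner_smul_left]
    rw [h2]
    have h3 : ‖x (ψ k)‖⁻¹ * (inner ℝ (x (ψ k)) (f (φ (ψ k))) : ℝ) ≤ ‖x (ψ k)‖⁻¹ * 1 :=
      mul_le_mul_of_nonneg_left h1 (inv_nonneg.2 (norm_nonneg _))
    have h4 : ‖x (ψ k)‖⁻¹ ≤ ((k:ℝ) + 1)⁻¹ := by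
      apply inv_anti₀ (by positivity)
      calc ((k:ℝ) + 1) ≤ (ψ k : ℝ) + 1 := by
            have hk' : k ≤ ψ k := hψ.le_apply
            have : (k:ℝ) ≤ (ψ k : ℝ) := by exact_mod_cast hk'
            linarith
        _ ≤ ‖x (ψ k)‖ := le_of_lt (hx2 (ψ k))
    calc ‖x (ψ k)‖⁻¹ * (inner ℝ (x (ψ k)) (f (φ (ψ k))) : ℝ) ≤ ‖x (ψ k)‖⁻¹ * 1 := h3
      _ = ‖x (ψ k)‖⁻¹ := mul_one _
      _ ≤ ((k:ℝ) + 1)⁻¹ := h4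
  have hlim : Tendsto (fun k => (inner ℝ ((w ∘ ψ) k) (f (φ (ψ k))) : ℝ)) atTop
      (𝓝 (inner ℝ a (r • a))) :=
    hwt.inner (hft.comp ((hφ.comp hψ).tendsto_atTop))
  have hzero : Tendsto (fun k : ℕ => ((k:ℝ) + 1)⁻¹) atTop (𝓝 0) := by
    exact tendsto_one_div_add_atTop_nhds_zero_nat.congr (fun n => one_div _)
  have hfin : (inner ℝ a (r • a) : ℝ) ≤ 0 := le_of_tendsto_of_tendsto' hlim hzero hkey
  rw [real_inner_smul_right, real_inner_self_eq_norm_sq, hanorm] at hfin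
  nlinarith

lemma infDist_polar_le {Lc : Set (Euc d)} (hcl : IsClosed Lc) (hconv : Convex ℝ Lc)
    (h0 : (0:Euc d) ∈ Lc) {R a M : ℝ} (hR : 0 < R) (ha : 0 ≤ a) {x : Euc d}
    (hxM : ‖x‖ ≤ M)
    (hxy : ∀ y ∈ Lc ∩ closedBall (0:Euc d) R, (inner ℝ x y : ℝ) ≤ 1 + a) :
    infDist x (polarSet Lc) ≤ 1 / R + a * M := by
  have h1a : (0:ℝ) < 1 + a := by linarith
  set x' := (1+a)⁻¹ • x with hx'def
  have hx' : x' ∈ polarSet (Lc ∩ closedBall 0 R) := by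
    intro y hy
    have heq : (inner ℝ x' y : ℝ) = (1+a)⁻¹ * inner ℝ x y := by
      rw [hx'def, real_inner_smul_left]
    rw [heq]
    calc (1+a)⁻¹ * (inner ℝ x y : ℝ) ≤ (1+a)⁻¹ * (1+a) :=
          mul_le_mul_of_nonneg_left (hxy y hy) (inv_nonneg.2 h1a.le)
      _ = 1 := inv_mul_cancel₀ h1a.ne'
  have hbip := bip hcl hconv h0 hR hx'
  have hd : dist x x' ≤ a * M := by
    have hsub : x - x' = (1 - (1+a)⁻¹) • x := by
      rw [hx'def, sub_smul, one_smul]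
    have hnn : (0:ℝ) ≤ 1 - (1+a)⁻¹ := by
      have : (1+a)⁻¹ ≤ 1 := by
        rw [inv_le_one_iff₀]; right; linarith
      linarith
    have h2 : 1 - (1+a)⁻¹ ≤ a := by
      have h3 : 1 - (1+a)⁻¹ = a / (1+a) := by field_simp; ring
      rw [h3, div_le_iff₀ h1a]
      nlinarith
    rw [dist_eq_norm, hsub, norm_smul, Real.norm_eq_abs, abs_of_nonneg hnn]
    have hM0 : (0:ℝ) ≤ M := le_trans (norm_nonneg x) hxM
    exact mul_le_mul h2 hxM (norm_nonneg x) ha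
  calc infDist x (polarSet Lc) ≤ infDist x' (polarSet Lc) + dist x x' :=
        infDist_le_infDist_add_dist
    _ ≤ 1 / R + a * M := by linarith

/-- If closed convex sets `L_n` containing `0` in their interiors converge in the
Painlevé–Kuratowski sense to a closed convex `L` with `0 ∈ Int L`, then the polar
sets are compact (convex, containing `0`) and `L_n° → L°` in the Hausdorff metric. -/
theorem hausdorff_polar_of_pkconv {d : ℕ} (L : ℕ → Set (Euc d)) (L₀ : Set (Euc d))
    (hLcl : ∀ n, IsClosed (L n)) (hLconv : ∀ n, Convex ℝ (L n))
    (hL0 : ∀ n, (0 : Euc d) ∈ interior (L n))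
    (hL₀cl : IsClosed L₀) (hL₀conv : Convex ℝ L₀)
    (hL₀0 : (0 : Euc d) ∈ interior L₀)
    (hconv : PKConv L L₀) :
    (∀ n, IsCompact (polarSet (L n))) ∧ IsCompact (polarSet L₀) ∧
      Tendsto (fun n => Metric.hausdorffDist (polarSet (L n)) (polarSet L₀))
        atTop (nhds 0) := by
  refine ⟨fun n => polarSet_compact (hL0 n), polarSet_compact hL₀0, ?_⟩
  obtain ⟨r, hr, hrball⟩ := exists_closedBall_subset hL₀0
  obtain ⟨M', hM', hMev⟩ := eventually_polar_bounded hconv.2 hL₀0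
  set C : ℝ := max M' r⁻¹ with hC
  have hC0 : 0 < C := lt_of_lt_of_le hM' (le_max_left _ _)
  -- key eventual bound
  have key : ∀ ε : ℝ, 0 < ε → ∀ᶠ n in atTop,
      Metric.hausdorffDist (polarSet (L n)) (polarSet L₀) ≤ ε := by
    intro ε hε
    set R : ℝ := 2 / ε with hRdef
    have hR : 0 < R := by positivity
    set η : ℝ := ε / (2 * C * (C + 1)) with hηdef
    have hη : 0 < η := by positivity
    have hbound : 1 / R + (C * η) * C ≤ ε := by
      have h1 : 1 / R = ε / 2 := by rw [hRdef]; field_simp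
      have h2 : (C * η) * C ≤ ε / 2 := by
        rw [hηdef]
        have hpos : (0:ℝ) < 2 * C * (C + 1) := by positivity
        have heq : C * (ε / (2 * C * (C + 1))) * C = ε * (C * C) / (2 * C * (C + 1)) := by
          ring
        rw [heq, div_le_div_iff₀ hpos (by norm_num : (0:ℝ) < 2)]
        nlinarith [mul_pos hε hC0]
      linarith
    filter_upwards [hMev, eventually_locapprox_limsup hconv.1 R hη,
      eventually_locapprox_liminf hconv.2 hL₀cl R hη] with n hMn hsup hinf
    apply Metric.hausdorffDist_le_of_infDist hε.le
    · -- ∀ x ∈ polarSet (L n), infDist x (polarSet L₀) ≤ ε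
      intro x hx
      have hxC : ‖x‖ ≤ C := le_trans (hMn x hx) (le_max_left _ _)
      have hxy : ∀ y ∈ L₀ ∩ closedBall (0:Euc d) R, (inner ℝ x y : ℝ) ≤ 1 + C * η := by
        intro y hy
        obtain ⟨z, hz, hzd⟩ := (hLcl n).exists_infDist_eq_dist
          ⟨0, interior_subset (hL0 n)⟩ y
        have hdz : dist y z ≤ η := by rw [← hzd]; exact hinf y hy
        have : (inner ℝ x y : ℝ) = inner ℝ x z + inner ℝ x (y - z) := by
          rw [← inner_add_right]; congr 1; abel
        rw [this]
        have h1 : (inner ℝ x z : ℝ) ≤ 1 := hx z hz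
        have h2 : (inner ℝ x (y - z) : ℝ) ≤ ‖x‖ * ‖y - z‖ := real_inner_le_norm x (y - z)
        have h3 : ‖y - z‖ ≤ η := by rw [← dist_eq_norm]; exact hdz
        have h4 : ‖x‖ * ‖y - z‖ ≤ C * η :=
          mul_le_mul hxC h3 (norm_nonneg _) hC0.le
        linarith
      have := infDist_polar_le hL₀cl hL₀conv (interior_subset hL₀0) hR
        (by positivity : (0:ℝ) ≤ C * η) hxC hxy
      calc infDist x (polarSet L₀) ≤ 1 / R + (C * η) * C := this
        _ ≤ ε := hbound
    · intro x hx
      have hxC : ‖x‖ ≤ C := by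
        have := polarSet_subset_closedBall hr hrball hx
        rw [mem_closedBall, dist_zero_right] at this
        exact le_trans this (le_max_right _ _)
      have hxy : ∀ y ∈ L n ∩ closedBall (0:Euc d) R, (inner ℝ x y : ℝ) ≤ 1 + C * η := by
        intro y hy
        obtain ⟨z, hz, hzd⟩ := hL₀cl.exists_infDist_eq_dist
          ⟨0, interior_subset hL₀0⟩ y
        have hdz : dist y z ≤ η := by rw [← hzd]; exact hsup y hy
        have : (inner ℝ x y : ℝ) = inner ℝ x z + inner ℝ x (y - z) := by
          rw [← inner_add_right]; congr 1; abel
        rw [this]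
        have h1 : (inner ℝ x z : ℝ) ≤ 1 := hx z hz
        have h2 : (inner ℝ x (y - z) : ℝ) ≤ ‖x‖ * ‖y - z‖ := real_inner_le_norm x (y - z)
        have h3 : ‖y - z‖ ≤ η := by rw [← dist_eq_norm]; exact hdz
        have h4 : ‖x‖ * ‖y - z‖ ≤ C * η :=
          mul_le_mul hxC h3 (norm_nonneg _) hC0.le
        linarith
      have := infDist_polar_le (hLcl n) (hLconv n) (interior_subset (hL0 n)) hR
        (by positivity : (0:ℝ) ≤ C * η) hxC hxy
      calc infDist x (polarSet (L n)) ≤ 1 / R + (C * η) * C := this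
        _ ≤ ε := hbound
  -- conclude tendsto
  rw [Metric.tendsto_atTop]
  intro ε hε
  obtain ⟨N, hN⟩ := eventually_atTop.1 (key (ε/2) (by positivity))
  refine ⟨N, fun n hn => ?_⟩
  rw [Real.dist_eq, sub_zero, abs_of_nonneg Metric.hausdorffDist_nonneg]
  exact lt_of_le_of_lt (hN n hn) (by linarith)
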